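/- arXiv:2204.13599 — 2 statements merged into one kernel-verified Lean document; each statement's English description precedes it below -/
import Mathlib

section
/- Consider a d-layer ReLU network G with weight matrices W_i ∈ ℝ^{n_i×n_{i−1}} and assume n_i ≥ k for all i ∈ [d]. Then for every i ∈ [d], the range of the sub-network G_i is contained in a union of at most Ψ_i = ∏_{j=1}^{i}(e n_j/k)^k affine subspaces of dimension k in ℝ^{n_i}; that is, range(G_i) ⊆ ∪_{j∈[Ψ_i]} S_{i,j} where each S_{i,j} is a k-dimensional affine subspace of ℝ^{n_i}. -/
open scoped BigOperators
open Real MeasureTheory ProbabilityTheory Filter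
open scoped Matrix

noncomputable section

namespace R2WDCFormal

/-- Euclidean inner product on `Fin n → ℝ`. -/
def dotp {n : ℕ} (r s : Fin n → ℝ) : ℝ := ∑ i, r i * s i

/-- Euclidean norm on `Fin n → ℝ`. -/
def vnorm {n : ℕ} (r : Fin n → ℝ) : ℝ := Real.sqrt (dotp r r)

/-- Angle between two vectors. -/
def ang {n : ℕ} (r s : Fin n → ℝ) : ℝ := Real.arccos (dotp r s / (vnorm r * vnorm s))

/-- Outer product of two vectors, as a matrix. -/
def outer {n : ℕ} (u v : Fin n → ℝ) : Matrix (Fin n) (Fin n) ℝ := Matrix.of fun i j => u i * v j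

/-- The matrix sending `r̂ ↦ ŝ`, `ŝ ↦ r̂` with kernel `span{r,s}ᗮ`. -/
def Mswap {n : ℕ} (r s : Fin n → ℝ) : Matrix (Fin n) (Fin n) ℝ :=
  outer ((vnorm ((vnorm r)⁻¹ • r + (vnorm s)⁻¹ • s))⁻¹ • ((vnorm r)⁻¹ • r + (vnorm s)⁻¹ • s))
        ((vnorm ((vnorm r)⁻¹ • r + (vnorm s)⁻¹ • s))⁻¹ • ((vnorm r)⁻¹ • r + (vnorm s)⁻¹ • s)) -
  outer ((vnorm ((vnorm r)⁻¹ • r - (vnorm s)⁻¹ • s))⁻¹ • ((vnorm r)⁻¹ • r - (vnorm s)⁻¹ • s))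
        ((vnorm ((vnorm r)⁻¹ • r - (vnorm s)⁻¹ • s))⁻¹ • ((vnorm r)⁻¹ • r - (vnorm s)⁻¹ • s))

/-- The matrix `Q_{r,s}`. -/
def Qmat {n : ℕ} (r s : Fin n → ℝ) : Matrix (Fin n) (Fin n) ℝ :=
  if r = 0 ∨ s = 0 then 0
  else ((π - ang r s) / (2 * π)) • (1 : Matrix (Fin n) (Fin n) ℝ) +
    (Real.sin (ang r s) / (2 * π)) • Mswap r s

/-- `W_{+,x} = diag(Wx > 0) W`. -/
def Wplus {m n : ℕ} (W : Matrix (Fin m) (Fin n) ℝ) (x : Fin n → ℝ) : Matrix (Fin m) (Fin n) ℝ :=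
  Matrix.of fun i j => if 0 < W.mulVec x i then W i j else 0

/-- Entrywise ReLU. -/
def reluVec {n : ℕ} (v : Fin n → ℝ) : Fin n → ℝ := fun i => max (v i) 0

/-- Sub-network `G_j` of the ReLU network with layer sizes `nn` and weights `W`. -/
def subnet (nn : ℕ → ℕ) (W : ∀ i : ℕ, Matrix (Fin (nn (i + 1))) (Fin (nn i)) ℝ) :
    ∀ j : ℕ, (Fin (nn 0) → ℝ) → Fin (nn j) → ℝ
  | 0, x => x
  | j + 1, x => reluVec ((W j).mulVec (subnet nn W j x))

/-- `Λ_{j,x} = W_{j,+,x} ⋯ W_{1,+,x}`. -/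
def LambdaMat (nn : ℕ → ℕ) (W : ∀ i : ℕ, Matrix (Fin (nn (i + 1))) (Fin (nn i)) ℝ) :
    ∀ j : ℕ, (Fin (nn 0) → ℝ) → Matrix (Fin (nn j)) (Fin (nn 0)) ℝ
  | 0, _ => 1
  | j + 1, x => Wplus (W j) (subnet nn W j x) * LambdaMat nn W j x

/-- Range Restricted Weight Distribution Condition with constant `ε` of a `d`-layer network. -/
def R2WDCond (nn : ℕ → ℕ) (d : ℕ)
    (W : ∀ i : ℕ, Matrix (Fin (nn (i + 1))) (Fin (nn i)) ℝ) (ε : ℝ) : Prop :=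
  ∀ i < d, ∀ x y x₁ x₂ x₃ x₄ : Fin (nn 0) → ℝ,
    |dotp (((Wplus (W i) (subnet nn W i x))ᵀ * Wplus (W i) (subnet nn W i y) -
        Qmat (subnet nn W i x) (subnet nn W i y)).mulVec
        (subnet nn W i x₁ - subnet nn W i x₂)) (subnet nn W i x₃ - subnet nn W i x₄)| ≤
      ε * vnorm (subnet nn W i x₁ - subnet nn W i x₂) * vnorm (subnet nn W i x₃ - subnet nn W i x₄)

/-- Range Restricted Isometry Condition of `A` with respect to the network, with constant `ε`. -/
def RRICond (nn : ℕ → ℕ) (d : ℕ)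
    (W : ∀ i : ℕ, Matrix (Fin (nn (i + 1))) (Fin (nn i)) ℝ) {mm : ℕ}
    (A : Matrix (Fin mm) (Fin (nn d)) ℝ) (ε : ℝ) : Prop :=
  ∀ x₁ x₂ x₃ x₄ : Fin (nn 0) → ℝ,
    |dotp ((Aᵀ * A - 1).mulVec (subnet nn W d x₁ - subnet nn W d x₂))
        (subnet nn W d x₃ - subnet nn W d x₄)| ≤
      ε * vnorm (subnet nn W d x₁ - subnet nn W d x₂) * vnorm (subnet nn W d x₃ - subnet nn W d x₄)

/-- The angle-distortion function `g`. -/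
def gAngle (θ : ℝ) : ℝ := Real.arccos (((π - θ) * Real.cos θ + Real.sin θ) / π)

/-- The deterministic vector field `h̃_{x,y}`. -/
def htilde {k : ℕ} (d : ℕ) (x y : Fin k → ℝ) : Fin k → ℝ :=
  (1 / 2 ^ d : ℝ) • ((∏ i ∈ Finset.range d, (π - gAngle^[i] (ang x y)) / π) • y +
    (∑ i ∈ Finset.Ico 1 d, Real.sin (gAngle^[i] (ang x y)) / π *
      ∏ j ∈ Finset.Ico (i + 1) d, (π - gAngle^[j] (ang x y)) / π) •
      (vnorm y • (vnorm x)⁻¹ • x))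

/-- Spectral (ℓ²-operator) norm of a matrix. -/
def specNorm {a b : ℕ} (M : Matrix (Fin a) (Fin b) ℝ) : ℝ :=
  ⨆ v : {v : Fin b → ℝ // vnorm v ≤ 1}, vnorm (M.mulVec v)

/-- The entries of the random matrix `W` are i.i.d. `N(0, v)`. -/
def IIDGaussian {Ω : Type*} [MeasurableSpace Ω] (μ : Measure Ω) {a b : ℕ}
    (W : Ω → Fin a → Fin b → ℝ) (v : NNReal) : Prop :=
  Measure.map W μ = Measure.pi fun _ : Fin a => Measure.pi fun _ : Fin b => gaussianReal 0 v

/-- The noise factor `ω`. -/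
def omegaNoise (nn : ℕ → ℕ) (d mm : ℕ) : ℝ :=
  2 / 2 ^ ((d : ℝ) / 2) * Real.sqrt (13 / 12) *
    Real.sqrt ((nn 0 : ℝ) / mm * Real.log (5 * ∏ j ∈ Finset.Icc 1 d, Real.exp 1 * nn j / nn 0))

/-- Clarke subdifferential of `f` at `x`: the convex hull of all limits of gradients of `f`
at nearby differentiability points. -/
def clarkeSubdiff {k : ℕ} (f : (Fin k → ℝ) → ℝ) (x : Fin k → ℝ) : Set (Fin k → ℝ) :=
  convexHull ℝ {v : Fin k → ℝ | ∃ u : ℕ → Fin k → ℝ,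
    (∀ t, DifferentiableAt ℝ f (u t)) ∧
    Tendsto u atTop (nhds x) ∧
    Tendsto (fun t => fun i => fderiv ℝ f (u t) (Pi.single i 1)) atTop (nhds v)}

/-- The compressed sensing objective `f_cs`. -/
def fcs (nn : ℕ → ℕ) (d : ℕ) (W : ∀ i : ℕ, Matrix (Fin (nn (i + 1))) (Fin (nn i)) ℝ)
    {mm : ℕ} (A : Matrix (Fin mm) (Fin (nn d)) ℝ) (b : Fin mm → ℝ)
    (x : Fin (nn 0) → ℝ) : ℝ :=
  1 / 2 * vnorm (b - A.mulVec (subnet nn W d x)) ^ 2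

end R2WDCFormal

/-!
On a nonempty `k`-dimensional affine subspace `S`, the layer `x ↦ relu (W x)` agrees on each cell
of the arrangement cut out by the affine functionals `x ↦ (W x)_t` with the linear map that zeroes
the inactive rows of `W`, so it maps `S` into one affine subspace of dimension `≤ k` per cell.
An arrangement of `n` affine functionals on a `k`-dimensional space has at most
`∑_{i ≤ k} (n choose i) ≤ (e n / k) ^ k` sign patterns: by induction on `n`, the last functional
splits a pattern of the first `n - 1` only if that pattern is realized on its zero set, a
`(k - 1)`-dimensional space. Since `k ≤ n_i` these images can be enlarged to dimension exactly `k`,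
and induction over the layers multiplies the counts.
-/

open Module

lemma sum_range_choose_succ (n k : ℕ) :
    ∑ i ∈ Finset.range (k + 1), (n + 1).choose i =
      ∑ i ∈ Finset.range (k + 1), n.choose i + ∑ i ∈ Finset.range k, n.choose i := by
  rw [Finset.sum_range_succ', Finset.sum_range_succ' (fun i => n.choose i)]
  simp only [Nat.choose_succ_succ', Finset.sum_add_distrib, Nat.choose_zero_right]
  ring

lemma sum_range_choose_le_exp_mul_div_pow {k n : ℕ} (hkn : k ≤ n) :
    (∑ i ∈ Finset.range (k + 1), (n.choose i : ℝ)) ≤ (exp 1 * n / k) ^ k := by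
  rcases Nat.eq_zero_or_pos k with rfl | hk
  · simp
  have hn : (0 : ℝ) < n := by exact_mod_cast hk.trans_le hkn
  set t : ℝ := k / n with ht
  have ht0 : 0 < t := by positivity
  have ht1 : t ≤ 1 := div_le_one_of_le₀ (by exact_mod_cast hkn) hn.le
  -- Chernoff's trick: weight the `i`-th term by `t ^ i ≥ t ^ k` and compare with `(1 + t) ^ n`.
  have hweighted : (∑ i ∈ Finset.range (k + 1), (n.choose i : ℝ)) * t ^ k ≤ exp 1 ^ k :=
    calc (∑ i ∈ Finset.range (k + 1), (n.choose i : ℝ)) * t ^ k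
        ≤ ∑ i ∈ Finset.range (k + 1), (n.choose i : ℝ) * t ^ i := by
          rw [Finset.sum_mul]
          refine Finset.sum_le_sum fun i hi => mul_le_mul_of_nonneg_left ?_ (by positivity)
          exact pow_le_pow_of_le_one ht0.le ht1 (Nat.lt_succ_iff.mp (Finset.mem_range.mp hi))
      _ ≤ ∑ i ∈ Finset.range (n + 1), (n.choose i : ℝ) * t ^ i :=
          Finset.sum_le_sum_of_subset_of_nonneg (Finset.range_subset_range.mpr (by omega))
            fun _ _ _ => by positivity
      _ = (t + 1) ^ n := by simp [add_pow, mul_comm]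
      _ ≤ exp t ^ n := by gcongr; exact add_one_le_exp t
      _ = exp 1 ^ k := by rw [← exp_nat_mul, ← exp_nat_mul, ht]; field_simp
  calc (∑ i ∈ Finset.range (k + 1), (n.choose i : ℝ))
      ≤ exp 1 ^ k / t ^ k := (le_div_iff₀ (by positivity)).mpr hweighted
    _ = (exp 1 * n / k) ^ k := by rw [ht, ← div_pow]; congr 1; field_simp

lemma Submodule.exists_le_finrank_eq {K V : Type*} [DivisionRing K] [AddCommGroup V]
    [Module K V] [FiniteDimensional K V] (U₀ : Submodule K V) {k : ℕ}
    (h₀ : finrank K U₀ ≤ k) (hk : k ≤ finrank K V) :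
    ∃ U : Submodule K V, U₀ ≤ U ∧ finrank K U = k := by
  induction k with
  | zero => exact ⟨U₀, le_rfl, by omega⟩
  | succ k ih =>
    rcases h₀.eq_or_lt with h | h
    · exact ⟨U₀, le_rfl, h⟩
    obtain ⟨U, hU₀, hUk⟩ := ih (by omega) (by omega)
    have hU : U ≠ ⊤ := fun h => by
      rw [h, finrank_top] at hUk
      omega
    obtain ⟨v, -, hv⟩ := SetLike.exists_of_lt (lt_top_iff_ne_top.mpr hU)
    exact ⟨U ⊔ Submodule.span K {v}, hU₀.trans le_sup_left, by
      rw [Submodule.finrank_sup_span_singleton hv, hUk]⟩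

lemma AffineSubspace.exists_le_finrank_direction_eq {K V : Type*} [Field K] [AddCommGroup V]
    [Module K V] [FiniteDimensional K V] {S : AffineSubspace K V} (hS : (S : Set V).Nonempty)
    {k : ℕ} (h₀ : finrank K S.direction ≤ k) (hk : k ≤ finrank K V) :
    ∃ T : AffineSubspace K V, S ≤ T ∧ (T : Set V).Nonempty ∧ finrank K T.direction = k := by
  obtain ⟨p, hp⟩ := hS
  obtain ⟨U, hSU, hUk⟩ := S.direction.exists_le_finrank_eq h₀ hk
  refine ⟨AffineSubspace.mk' p U, ?_, ⟨p, AffineSubspace.self_mem_mk' p U⟩, by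
    rwa [AffineSubspace.direction_mk']⟩
  rw [← AffineSubspace.mk'_eq hp]
  exact (AffineSubspace.mk'_le_mk'_iff p).mpr hSU

namespace R2WDCFormal

section SignPatterns

variable {V : Type*} [AddCommGroup V] [Module ℝ V] {n : ℕ}

def signPattern (L : Fin n → V →ₗ[ℝ] ℝ) (c : Fin n → ℝ) (x : V) : Finset (Fin n) :=
  Finset.univ.filter fun t => 0 < L t x + c t

lemma mem_signPattern {L : Fin n → V →ₗ[ℝ] ℝ} {c : Fin n → ℝ} {x : V} {t : Fin n} :
    t ∈ signPattern L c x ↔ 0 < L t x + c t := by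
  simp [signPattern]

/-- The zero of the last functional on the segment from `xm` to `xp` inherits the signs the other
functionals share at both ends. -/
lemma exists_signPattern_init_eq_of_last {L : Fin (n + 1) → V →ₗ[ℝ] ℝ} {c : Fin (n + 1) → ℝ}
    {xp xm : V} (hp : Fin.last n ∈ signPattern L c xp) (hm : Fin.last n ∉ signPattern L c xm)
    (h : signPattern (Fin.init L) (Fin.init c) xp = signPattern (Fin.init L) (Fin.init c) xm) :
    ∃ z, L (Fin.last n) z + c (Fin.last n) = 0 ∧
      signPattern (Fin.init L) (Fin.init c) z = signPattern (Fin.init L) (Fin.init c) xp := by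
  set f : Fin (n + 1) → V → ℝ := fun t x => L t x + c t
  have hxp : 0 < f (Fin.last n) xp := mem_signPattern.mp hp
  have hxm : f (Fin.last n) xm ≤ 0 := not_lt.mp (mt mem_signPattern.mpr hm)
  set a := f (Fin.last n) xp
  set b := f (Fin.last n) xm
  have hab : a - b ≠ 0 := by linarith
  have hcomb : ∀ t, f t ((a / (a - b)) • xm + (-b / (a - b)) • xp) =
      a / (a - b) * f t xm + -b / (a - b) * f t xp := fun t => by
    simp only [f, map_add, map_smul, smul_eq_mul]
    field_simp
    ring
  refine ⟨(a / (a - b)) • xm + (-b / (a - b)) • xp, (hcomb _).trans (by field_simp; ring), ?_⟩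
  have hwm : 0 < a / (a - b) := div_pos hxp (by linarith)
  have hwp : 0 ≤ -b / (a - b) := div_nonneg (by linarith) (by linarith)
  ext t
  have hsame : 0 < f t.castSucc xm ↔ 0 < f t.castSucc xp := by
    simpa [mem_signPattern, Fin.init] using (Finset.ext_iff.mp h t).symm
  simp only [mem_signPattern, Fin.init]
  change 0 < f t.castSucc _ ↔ 0 < f t.castSucc xp
  rw [hcomb]
  by_cases hpos : 0 < f t.castSucc xp
  · exact iff_of_true
      (add_pos_of_pos_of_nonneg (mul_pos hwm (hsame.mpr hpos)) (mul_nonneg hwp hpos.le)) hpos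
  · exact iff_of_false (not_lt.mpr (add_nonpos
      (mul_nonpos_of_nonneg_of_nonpos hwm.le (not_lt.mp (mt hsame.mp hpos)))
      (mul_nonpos_of_nonneg_of_nonpos hwp (not_lt.mp hpos)))) hpos

lemma exists_signPattern_ker_eq {ℓ : V →ₗ[ℝ] ℝ} (hℓ : ℓ ≠ 0) (d : ℝ)
    (L : Fin n → V →ₗ[ℝ] ℝ) (c : Fin n → ℝ) :
    ∃ (M : Fin n → LinearMap.ker ℓ →ₗ[ℝ] ℝ) (e : Fin n → ℝ),
      ∀ z, ℓ z + d = 0 → signPattern L c z ∈ Set.range (signPattern M e) := by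
  obtain ⟨x₀, hx₀⟩ := LinearMap.range_eq_top.mp (Module.Dual.range_eq_top_of_ne_zero hℓ) (-d)
  refine ⟨fun t => L t ∘ₗ (LinearMap.ker ℓ).subtype, fun t => L t x₀ + c t,
    fun z hz => ⟨⟨z - x₀, by simp [hx₀]; linarith⟩, ?_⟩⟩
  ext t
  simp only [mem_signPattern, LinearMap.comp_apply, Submodule.subtype_apply, map_sub]
  ring_nf

def castSuccPreimage (A : Finset (Fin (n + 1))) : Finset (Fin n) :=
  A.preimage Fin.castSucc (Fin.castSucc_injective n).injOn

lemma castSuccPreimage_signPattern (L : Fin (n + 1) → V →ₗ[ℝ] ℝ) (c : Fin (n + 1) → ℝ) (x : V) :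
    castSuccPreimage (signPattern L c x) = signPattern (Fin.init L) (Fin.init c) x := by
  ext t
  simp [castSuccPreimage, mem_signPattern, Fin.init]

lemma eq_of_last_mem_iff_of_castSuccPreimage_eq {A B : Finset (Fin (n + 1))}
    (hlast : Fin.last n ∈ A ↔ Fin.last n ∈ B) (h : castSuccPreimage A = castSuccPreimage B) :
    A = B := by
  ext t
  induction t using Fin.lastCases with
  | last => exact hlast
  | cast t => simpa [castSuccPreimage] using Finset.ext_iff.mp h t

def splitPatterns (P : Set (Finset (Fin (n + 1)))) : Set (Finset (Fin n)) :=
  castSuccPreimage '' {A ∈ P | Fin.last n ∈ A} ∩ castSuccPreimage '' {A ∈ P | Fin.last n ∉ A}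

lemma ncard_le_ncard_image_add_ncard_splitPatterns (P : Set (Finset (Fin (n + 1)))) :
    P.ncard ≤ (castSuccPreimage '' P).ncard + (splitPatterns P).ncard := by
  set Pp := {A ∈ P | Fin.last n ∈ A}
  set Pm := {A ∈ P | Fin.last n ∉ A}
  calc P.ncard = Pp.ncard + Pm.ncard := (Set.ncard_inter_add_ncard_sdiff_eq_ncard _ _).symm
    _ = (castSuccPreimage '' Pp).ncard + (castSuccPreimage '' Pm).ncard := by
      rw [Set.InjOn.ncard_image fun A hA B hB =>
          eq_of_last_mem_iff_of_castSuccPreimage_eq (iff_of_true hA.2 hB.2),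
        Set.InjOn.ncard_image fun A hA B hB =>
          eq_of_last_mem_iff_of_castSuccPreimage_eq (iff_of_false hA.2 hB.2)]
    _ = (castSuccPreimage '' Pp ∪ castSuccPreimage '' Pm).ncard + (splitPatterns P).ncard :=
      (Set.ncard_union_add_ncard_inter _ _).symm
    _ ≤ (castSuccPreimage '' P).ncard + (splitPatterns P).ncard := by
      gcongr
      · exact Set.toFinite _
      · exact Set.union_subset (Set.image_mono fun _ h => h.1) (Set.image_mono fun _ h => h.1)

lemma splitPatterns_range_signPattern_eq_empty {L : Fin (n + 1) → V →ₗ[ℝ] ℝ}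
    (hℓ : L (Fin.last n) = 0) (c : Fin (n + 1) → ℝ) :
    splitPatterns (Set.range (signPattern L c)) = ∅ := by
  refine Set.eq_empty_of_forall_notMem ?_
  rintro _ ⟨⟨_, ⟨⟨xp, rfl⟩, hp⟩, rfl⟩, ⟨_, ⟨⟨xm, rfl⟩, hm⟩, -⟩⟩
  have hxp := mem_signPattern.mp hp
  have hxm := mt mem_signPattern.mpr hm
  simp only [hℓ, LinearMap.zero_apply, zero_add] at hxp hxm
  exact hxm hxp

lemma exists_splitPatterns_subset_range_signPattern {L : Fin (n + 1) → V →ₗ[ℝ] ℝ}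
    (hℓ : L (Fin.last n) ≠ 0) (c : Fin (n + 1) → ℝ) :
    ∃ (M : Fin n → LinearMap.ker (L (Fin.last n)) →ₗ[ℝ] ℝ) (e : Fin n → ℝ),
      splitPatterns (Set.range (signPattern L c)) ⊆ Set.range (signPattern M e) := by
  obtain ⟨M, e, hMe⟩ := exists_signPattern_ker_eq hℓ (c (Fin.last n)) (Fin.init L) (Fin.init c)
  refine ⟨M, e, ?_⟩
  rintro _ ⟨⟨_, ⟨⟨xp, rfl⟩, hp⟩, rfl⟩, ⟨_, ⟨⟨xm, rfl⟩, hm⟩, hpm⟩⟩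
  rw [castSuccPreimage_signPattern, castSuccPreimage_signPattern] at hpm
  obtain ⟨z, hz, hzp⟩ := exists_signPattern_init_eq_of_last hp hm hpm.symm
  rw [castSuccPreimage_signPattern, ← hzp]
  exact hMe z hz

theorem ncard_range_signPattern_le [FiniteDimensional ℝ V] (L : Fin n → V →ₗ[ℝ] ℝ)
    (c : Fin n → ℝ) :
    (Set.range (signPattern L c)).ncard ≤
      ∑ i ∈ Finset.range (finrank ℝ V + 1), n.choose i := by
  induction n generalizing V with
  | zero =>
    calc (Set.range (signPattern L c)).ncard ≤ 1 := Set.ncard_le_one_of_subsingleton _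
      _ ≤ _ := by simp [Finset.sum_range_succ']
  | succ n ih =>
    have himage : castSuccPreimage '' Set.range (signPattern L c) =
        Set.range (signPattern (Fin.init L) (Fin.init c)) := by
      rw [← Set.range_comp]
      exact congrArg Set.range (funext (castSuccPreimage_signPattern L c))
    have hsplit : (splitPatterns (Set.range (signPattern L c))).ncard ≤
        ∑ i ∈ Finset.range (finrank ℝ V), n.choose i := by
      by_cases hℓ : L (Fin.last n) = 0
      · simp [splitPatterns_range_signPattern_eq_empty hℓ]
      obtain ⟨M, e, hsub⟩ := exists_splitPatterns_subset_range_signPattern hℓ c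
      calc _ ≤ (Set.range (signPattern M e)).ncard := Set.ncard_le_ncard hsub (Set.toFinite _)
        _ ≤ _ := ih _ _
        _ = _ := by rw [Module.Dual.finrank_ker_add_one_of_ne_zero hℓ]
    calc _ ≤ (castSuccPreimage '' Set.range (signPattern L c)).ncard +
          (splitPatterns (Set.range (signPattern L c))).ncard :=
        ncard_le_ncard_image_add_ncard_splitPatterns _
      _ ≤ ∑ i ∈ Finset.range (finrank ℝ V + 1), n.choose i +
          ∑ i ∈ Finset.range (finrank ℝ V), n.choose i := by
        rw [himage]
        exact add_le_add (ih _ _) hsplit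
      _ = _ := (sum_range_choose_succ n _).symm

end SignPatterns

section AffineCovers

variable {E F : Type*} [AddCommGroup E] [Module ℝ E] [AddCommGroup F] [Module ℝ F]

def CoveredByAffineSubspaces (k N : ℕ) (s : Set E) : Prop :=
  ∃ 𝒮 : Finset (AffineSubspace ℝ E), 𝒮.card ≤ N ∧
    (∀ S ∈ 𝒮, (S : Set E).Nonempty ∧ finrank ℝ S.direction = k) ∧ s ⊆ ⋃ S ∈ 𝒮, (S : Set E)

lemma coveredByAffineSubspaces_univ [FiniteDimensional ℝ E] :
    CoveredByAffineSubspaces (finrank ℝ E) 1 (Set.univ : Set E) :=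
  ⟨{⊤}, by simp, fun S hS => by
    rw [Finset.mem_singleton.mp hS, AffineSubspace.direction_top, finrank_top]
    exact ⟨⟨0, trivial⟩, rfl⟩, by simp⟩

lemma CoveredByAffineSubspaces.image {k N M : ℕ} {s : Set E}
    (hs : CoveredByAffineSubspaces k N s) (f : E → F)
    (hf : ∀ S : AffineSubspace ℝ E, (S : Set E).Nonempty → finrank ℝ S.direction = k →
      CoveredByAffineSubspaces k M (f '' S)) :
    CoveredByAffineSubspaces k (N * M) (f '' s) := by
  classical
  obtain ⟨𝒮, h𝒮N, h𝒮, hs𝒮⟩ := hs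
  choose! 𝒯 h𝒯M h𝒯 hS𝒯 using fun S (hS : S ∈ 𝒮) => hf S (h𝒮 S hS).1 (h𝒮 S hS).2
  refine ⟨𝒮.biUnion 𝒯, (Finset.card_biUnion_le_card_mul _ _ _ h𝒯M).trans
      (Nat.mul_le_mul_right _ h𝒮N), ?_, ?_⟩
  · simp only [Finset.mem_biUnion]
    rintro T ⟨S, hS, hT⟩
    exact h𝒯 S hS T hT
  · rintro _ ⟨x, hx, rfl⟩
    obtain ⟨S, hS, hxS⟩ := Set.mem_iUnion₂.mp (hs𝒮 hx)
    obtain ⟨T, hT, hxT⟩ := Set.mem_iUnion₂.mp (hS𝒯 S hS ⟨x, hxS, rfl⟩)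
    exact Set.mem_iUnion₂.mpr ⟨T, Finset.mem_biUnion.mpr ⟨S, hS, hT⟩, hxT⟩

end AffineCovers

section ReluLayer

variable {m n : ℕ}

def rowMask (A : Finset (Fin n)) (W : Matrix (Fin n) (Fin m) ℝ) : Matrix (Fin n) (Fin m) ℝ :=
  Matrix.of fun t s => if t ∈ A then W t s else 0

lemma reluVec_mulVec_eq_rowMask_mulVec (W : Matrix (Fin n) (Fin m) ℝ) (x : Fin m → ℝ) :
    reluVec (W *ᵥ x) = rowMask (Finset.univ.filter fun t => 0 < (W *ᵥ x) t) W *ᵥ x := by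
  ext t
  simp only [reluVec, rowMask, Matrix.mulVec, dotProduct, Matrix.of_apply, Finset.mem_filter,
    Finset.mem_univ, true_and]
  split_ifs with ht
  · exact max_eq_left ht.le
  · simpa using not_lt.mp ht

lemma coveredByAffineSubspaces_image_reluVec_mulVec (W : Matrix (Fin n) (Fin m) ℝ)
    {k : ℕ} (hkn : k ≤ n) {S : AffineSubspace ℝ (Fin m → ℝ)} (hS : (S : Set (Fin m → ℝ)).Nonempty)
    (hSk : finrank ℝ S.direction = k) :
    CoveredByAffineSubspaces k (∑ i ∈ Finset.range (k + 1), n.choose i)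
      ((fun x => reluVec (W *ᵥ x)) '' S) := by
  classical
  obtain ⟨p, hp⟩ := hS
  set L : Fin n → S.direction →ₗ[ℝ] ℝ :=
    fun t => LinearMap.proj t ∘ₗ W.mulVecLin ∘ₗ S.direction.subtype
  have hpattern : ∀ x (hx : x ∈ S), Finset.univ.filter (fun t => 0 < (W *ᵥ x) t) =
      signPattern L (W *ᵥ p) ⟨x - p, AffineSubspace.vsub_mem_direction hx hp⟩ := by
    intro x hx
    ext t
    simp [mem_signPattern, L, Matrix.mulVec_sub]
  have hT : ∀ A : Finset (Fin n), ∃ T : AffineSubspace ℝ (Fin n → ℝ),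
      S.map (rowMask A W).mulVecLin.toAffineMap ≤ T ∧ (T : Set (Fin n → ℝ)).Nonempty ∧
        finrank ℝ T.direction = k := by
    intro A
    refine AffineSubspace.exists_le_finrank_direction_eq ⟨_, AffineSubspace.mem_map_of_mem _ hp⟩
      ?_ (by simpa using hkn)
    rw [AffineSubspace.map_direction, ← hSk]
    exact Submodule.finrank_map_le _ _
  choose T hST hT using hT
  have hfin := Set.toFinite (Set.range (signPattern L (W *ᵥ p)))
  refine ⟨hfin.toFinset.image T, ?_, ?_, ?_⟩
  · refine Finset.card_image_le.trans ?_
    rw [← Set.ncard_eq_toFinset_card _ hfin, ← hSk]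
    exact ncard_range_signPattern_le L _
  · intro T' hT'
    obtain ⟨A, -, rfl⟩ := Finset.mem_image.mp hT'
    exact hT A
  · rintro _ ⟨x, hx, rfl⟩
    set A := signPattern L (W *ᵥ p) ⟨x - p, AffineSubspace.vsub_mem_direction hx hp⟩
    refine Set.mem_iUnion₂.mpr
      ⟨T A, Finset.mem_image_of_mem _ (hfin.mem_toFinset.mpr ⟨_, rfl⟩), hST A ?_⟩
    beta_reduce
    rw [reluVec_mulVec_eq_rowMask_mulVec, hpattern x hx]
    exact AffineSubspace.mem_map_of_mem _ hx

end ReluLayer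


lemma coveredByAffineSubspaces_range_subnet (nn : ℕ → ℕ) (d : ℕ)
    (W : ∀ i : ℕ, Matrix (Fin (nn (i + 1))) (Fin (nn i)) ℝ)
    (hk : ∀ i, 1 ≤ i → i ≤ d → nn 0 ≤ nn i) {i : ℕ} (hid : i ≤ d) :
    CoveredByAffineSubspaces (nn 0)
      (∏ j ∈ Finset.Icc 1 i, ∑ t ∈ Finset.range (nn 0 + 1), (nn j).choose t)
      (Set.range (subnet nn W i)) := by
  induction i with
  | zero =>
    have hrange : Set.range (subnet nn W 0) = Set.univ := Set.range_id
    simpa [hrange] using coveredByAffineSubspaces_univ (E := Fin (nn 0) → ℝ)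
  | succ i ih =>
    have hrange : Set.range (subnet nn W (i + 1)) =
        (fun x => reluVec (W i *ᵥ x)) '' Set.range (subnet nn W i) :=
      Set.range_comp (fun x => reluVec (W i *ᵥ x)) (subnet nn W i)
    rw [Finset.prod_Icc_succ_top (by omega), hrange]
    exact (ih (by omega)).image _ fun S hS hSk =>
      coveredByAffineSubspaces_image_reluVec_mulVec (W i) (hk _ (by omega) hid) hS hSk

theorem statement2 (nn : ℕ → ℕ) (d : ℕ)
    (W : ∀ i : ℕ, Matrix (Fin (nn (i + 1))) (Fin (nn i)) ℝ)
    (hk : ∀ i, 1 ≤ i → i ≤ d → nn 0 ≤ nn i) :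
    ∀ i, 1 ≤ i → i ≤ d →
      ∃ (N : ℕ) (S : Fin N → AffineSubspace ℝ (Fin (nn i) → ℝ)),
        (N : ℝ) ≤ ∏ j ∈ Finset.Icc 1 i, (Real.exp 1 * nn j / nn 0) ^ (nn 0) ∧
        (∀ j, (S j : Set (Fin (nn i) → ℝ)).Nonempty ∧
          Module.finrank ℝ (S j).direction = nn 0) ∧
        Set.range (subnet nn W i) ⊆ ⋃ j, (S j : Set (Fin (nn i) → ℝ)) := by
  intro i _ hid
  obtain ⟨𝒮, hcard, h𝒮, hcover⟩ := coveredByAffineSubspaces_range_subnet nn d W hk hid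
  refine ⟨𝒮.card, fun j => 𝒮.equivFin.symm j, ?_, fun j => h𝒮 _ (𝒮.equivFin.symm j).2, ?_⟩
  · calc (𝒮.card : ℝ)
        ≤ ∏ j ∈ Finset.Icc 1 i, ∑ t ∈ Finset.range (nn 0 + 1), ((nn j).choose t : ℝ) := by
          exact_mod_cast hcard
      _ ≤ _ := Finset.prod_le_prod (fun _ _ => by positivity) fun j hj =>
          have hj := Finset.mem_Icc.mp hj
          sum_range_choose_le_exp_mul_div_pow (hk j hj.1 (hj.2.trans hid))
  · refine hcover.trans fun x hx => ?_
    obtain ⟨S, hS, hxS⟩ := Set.mem_iUnion₂.mp hx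
    exact Set.mem_iUnion.mpr ⟨𝒮.equivFin ⟨S, hS⟩, by simpa using hxS⟩

end R2WDCFormal
end
end

section
/- Fix ε > 0 such that max(2dε, 10ε) < 1, and let G be a d-layer ReLU network satisfying the R2WDC with constant ε. Then for every x ∈ ℝ^k and every j ∈ [d]: (1/2 − ε)^j ‖x‖² ≤ ‖G_j(x)‖² ≤ (1/2 + ε)^j ‖x‖². -/
open scoped BigOperators
open Real MeasureTheory ProbabilityTheory Filter
open scoped Matrix

noncomputable section

namespace R2WDCFormal

lemma dotp_self_nonneg {n : ℕ} (v : Fin n → ℝ) : 0 ≤ dotp v v :=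
  Finset.sum_nonneg fun i _ => mul_self_nonneg (v i)

lemma vnorm_sq {n : ℕ} (v : Fin n → ℝ) : vnorm v ^ 2 = dotp v v := by
  rw [vnorm, sq, Real.mul_self_sqrt (dotp_self_nonneg v)]

lemma dotp_self_pos {n : ℕ} {v : Fin n → ℝ} (hv : v ≠ 0) : 0 < dotp v v := by
  rcases Function.ne_iff.mp hv with ⟨i, hi⟩
  exact Finset.sum_pos' (fun j _ => mul_self_nonneg (v j))
    ⟨i, Finset.mem_univ i, mul_self_pos.mpr hi⟩

lemma reluVec_zero {n : ℕ} : reluVec (0 : Fin n → ℝ) = 0 := by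
  funext i; simp [reluVec]

lemma subnet_zero (nn : ℕ → ℕ) (W : ∀ i : ℕ, Matrix (Fin (nn (i + 1))) (Fin (nn i)) ℝ) :
    ∀ j, subnet nn W j (0 : Fin (nn 0) → ℝ) = 0 := by
  intro j
  induction j with
  | zero => rfl
  | succ j ih => rw [subnet, ih, Matrix.mulVec_zero, reluVec_zero]

lemma Wplus_mulVec_self {m n : ℕ} (W : Matrix (Fin m) (Fin n) ℝ) (v : Fin n → ℝ) :
    (Wplus W v).mulVec v = reluVec (W.mulVec v) := by
  funext i
  have h1 : (Wplus W v).mulVec v i = if 0 < W.mulVec v i then W.mulVec v i else 0 := by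
    simp only [Wplus, Matrix.mulVec, dotProduct, Matrix.of_apply]
    by_cases h : 0 < ∑ j, W i j * v j
    · simp [h]
    · simp [h]
  rw [h1, reluVec]
  split_ifs with h
  · exact (max_eq_left h.le).symm
  · exact (max_eq_right (not_lt.mp h)).symm

lemma ang_self {n : ℕ} {v : Fin n → ℝ} (hv : v ≠ 0) : ang v v = 0 := by
  have h1 : vnorm v * vnorm v = dotp v v := Real.mul_self_sqrt (dotp_self_nonneg v)
  rw [ang, h1, div_self (ne_of_gt (dotp_self_pos hv)), Real.arccos_one]

lemma Qmat_self {n : ℕ} {v : Fin n → ℝ} (hv : v ≠ 0) :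
    Qmat v v = (1 / 2 : ℝ) • (1 : Matrix (Fin n) (Fin n) ℝ) := by
  rw [Qmat, if_neg (by simp [hv]), ang_self hv, Real.sin_zero]
  have hπ : (π : ℝ) ≠ 0 := Real.pi_ne_zero
  rw [sub_zero, zero_div, zero_smul, add_zero]
  congr 1
  field_simp

lemma dotp_Qmat_self {n : ℕ} (v : Fin n → ℝ) :
    dotp ((Qmat v v).mulVec v) v = (1 / 2 : ℝ) * dotp v v := by
  by_cases hv : v = 0
  · subst hv; simp [dotp, Matrix.mulVec_zero]
  · rw [Qmat_self hv, Matrix.smul_mulVec, Matrix.one_mulVec]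
    simp [dotp, Finset.mul_sum, mul_assoc]

/-- one-step bound -/
lemma step_bound (nn : ℕ → ℕ) (d : ℕ)
    (W : ∀ i : ℕ, Matrix (Fin (nn (i + 1))) (Fin (nn i)) ℝ) (ε : ℝ)
    (hG : R2WDCond nn d W ε) (x : Fin (nn 0) → ℝ) {i : ℕ} (hi : i < d) :
    (1 / 2 - ε) * vnorm (subnet nn W i x) ^ 2 ≤ vnorm (subnet nn W (i + 1) x) ^ 2 ∧
    vnorm (subnet nn W (i + 1) x) ^ 2 ≤ (1 / 2 + ε) * vnorm (subnet nn W i x) ^ 2 := by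
  set v := subnet nn W i x with hv
  have key := hG i hi x x x 0 x 0
  rw [subnet_zero, sub_zero] at key
  set M := Wplus (W i) v with hM
  have hnext : subnet nn W (i + 1) x = M.mulVec v := by
    rw [subnet, ← Wplus_mulVec_self]
  have hMM : dotp ((Mᵀ * M).mulVec v) v = vnorm (subnet nn W (i + 1) x) ^ 2 := by
    rw [hnext, vnorm_sq]
    show (Mᵀ * M).mulVec v ⬝ᵥ v = M.mulVec v ⬝ᵥ M.mulVec v
    rw [← Matrix.mulVec_mulVec, Matrix.mulVec_transpose, ← Matrix.dotProduct_mulVec,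
      dotProduct_comm]
  have hsplit : dotp (((Mᵀ * M) - Qmat v v).mulVec v) v
      = vnorm (subnet nn W (i + 1) x) ^ 2 - (1 / 2 : ℝ) * vnorm v ^ 2 := by
    rw [Matrix.sub_mulVec, ← hMM, vnorm_sq v, ← dotp_Qmat_self v]
    show ((Mᵀ * M).mulVec v - (Qmat v v).mulVec v) ⬝ᵥ v
      = (Mᵀ * M).mulVec v ⬝ᵥ v - (Qmat v v).mulVec v ⬝ᵥ v
    rw [sub_dotProduct]
  rw [hsplit] at key
  have hvs : vnorm v * vnorm v = vnorm v ^ 2 := (sq (vnorm v)).symm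
  rw [mul_assoc, hvs] at key
  have := abs_le.mp key
  constructor <;> nlinarith [this.1, this.2]

theorem statement11 (nn : ℕ → ℕ) (d : ℕ)
    (W : ∀ i : ℕ, Matrix (Fin (nn (i + 1))) (Fin (nn i)) ℝ) (ε : ℝ)
    (hε : 0 < ε) (hεd : 2 * (d : ℝ) * ε < 1) (hε10 : 10 * ε < 1)
    (hG : R2WDCond nn d W ε) :
    ∀ x : Fin (nn 0) → ℝ, ∀ j : ℕ, 1 ≤ j → j ≤ d →
      (1 / 2 - ε) ^ j * vnorm x ^ 2 ≤ vnorm (subnet nn W j x) ^ 2 ∧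
      vnorm (subnet nn W j x) ^ 2 ≤ (1 / 2 + ε) ^ j * vnorm x ^ 2 := by
  intro x j hj1 hjd
  clear hj1
  induction j with
  | zero => constructor <;> simp [subnet]
  | succ j ih =>
    have hjd' : j < d := Nat.lt_of_succ_le hjd
    obtain ⟨ih1, ih2⟩ := ih (le_of_lt hjd')
    obtain ⟨s1, s2⟩ := step_bound nn d W ε hG x hjd'
    have hεlt : ε < 1 / 2 := by linarith
    have h1 : (0 : ℝ) ≤ 1 / 2 - ε := by linarith
    have h2 : (0 : ℝ) ≤ 1 / 2 + ε := by linarith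
    constructor
    · calc (1 / 2 - ε) ^ (j + 1) * vnorm x ^ 2
          = (1 / 2 - ε) * ((1 / 2 - ε) ^ j * vnorm x ^ 2) := by ring
        _ ≤ (1 / 2 - ε) * vnorm (subnet nn W j x) ^ 2 := by
            exact mul_le_mul_of_nonneg_left ih1 h1
        _ ≤ vnorm (subnet nn W (j + 1) x) ^ 2 := s1
    · calc vnorm (subnet nn W (j + 1) x) ^ 2
          ≤ (1 / 2 + ε) * vnorm (subnet nn W j x) ^ 2 := s2
        _ ≤ (1 / 2 + ε) * ((1 / 2 + ε) ^ j * vnorm x ^ 2) := by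
            exact mul_le_mul_of_nonneg_left ih2 h2
        _ = (1 / 2 + ε) ^ (j + 1) * vnorm x ^ 2 := by ring

end R2WDCFormal
end
end
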